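/- With the GLM notation below and assuming additionally 0 < μ̇_min ≤ μ'(u) ≤ μ̇_max for all u ∈ ℝ, define G_t = Σ_{l=1}^t X_l X_lᵀ + (λ/μ̇_min)·I_d. Then for all θ, θ', θ'' ∈ ℝ^d, ‖θ − θ'‖_{H(θ'')} ≤ μ̇_max^{1/2}·μ̇_min^{−1}·‖f_t(θ) − f_t(θ')‖_{G_t⁻¹}. -/

import Mathlib

/-!
Write `v = θ - θ'` and `w = f θ - f θ'`. Since `μ' ≥ μ̇_min`, the mean value theorem gives
`(μ a - μ b) (a - b) ≥ μ̇_min (a - b)²`, hence `⟨w, v⟩ ≥ μ̇_min ‖v‖²_G`. Cauchy–Schwarz,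
`⟨w, v⟩² ≤ ‖w‖²_{G⁻¹} ‖v‖²_G`, turns this into `μ̇_min ‖v‖_G ≤ ‖w‖_{G⁻¹}`, and `μ' ≤ μ̇_max`
gives `H(θ'') ≤ μ̇_max G`.
-/

open Matrix

theorem mul_sq_le_sub_mul_sub_of_le_deriv {μ : ℝ → ℝ} (hμ : Differentiable ℝ μ) {m : ℝ}
    (hm : ∀ u, m ≤ deriv μ u) (a b : ℝ) : m * (a - b) ^ 2 ≤ (μ a - μ b) * (a - b) := by
  rcases le_total b a with hba | hab
  · have := mul_sub_le_image_sub_of_le_deriv hμ hm hba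
    nlinarith [sub_nonneg.2 hba]
  · have := mul_sub_le_image_sub_of_le_deriv hμ hm hab
    nlinarith [sub_nonneg.2 hab]

namespace Matrix

variable {n : Type*} [Fintype n] [DecidableEq n]

theorem PosDef.sq_dotProduct_le {A : Matrix n n ℝ} (hA : A.PosDef) (x y : n → ℝ) :
    (x ⬝ᵥ y) ^ 2 ≤ (x ⬝ᵥ A⁻¹ *ᵥ x) * (y ⬝ᵥ A *ᵥ y) := by
  have hdet : IsUnit A.det := (isUnit_iff_isUnit_det A).mp hA.isUnit
  have hcancel : A⁻¹ *ᵥ (A *ᵥ y) = y := by rw [mulVec_mulVec, nonsing_inv_mul A hdet, one_mulVec]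
  have hsymm : (A⁻¹)ᵀ = A⁻¹ := by
    simpa [conjTranspose_eq_transpose_of_trivial] using hA.inv.isHermitian.eq
  -- Cauchy–Schwarz for the form of `A⁻¹`, applied to `x` and `A *ᵥ y`.
  let B : LinearMap.BilinForm ℝ (n → ℝ) := toLinearMap₂' ℝ A⁻¹
  have hB : ∀ u v, B u v = u ⬝ᵥ A⁻¹ *ᵥ v := fun u v => toLinearMap₂'_apply' A⁻¹ u v
  have hBnonneg : ∀ u, 0 ≤ B u u := fun u => by
    simpa [hB] using hA.inv.posSemidef.dotProduct_mulVec_nonneg u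
  have hBsymm : LinearMap.IsSymm B := LinearMap.isSymm_def.mpr fun u v => by
    rw [RingHom.id_apply, hB, hB, dotProduct_mulVec, ← mulVec_transpose, hsymm, dotProduct_comm]
  have := LinearMap.BilinForm.apply_sq_le_of_symm B hBnonneg hBsymm x (A *ᵥ y)
  rwa [hB, hB, hB, hcancel, dotProduct_comm (A *ᵥ y)] at this

theorem PosDef.mul_sq_dotProduct_mulVec_le {A : Matrix n n ℝ} (hA : A.PosDef) {m : ℝ} (hm : 0 ≤ m)
    {v w : n → ℝ} (h : m * (v ⬝ᵥ A *ᵥ v) ≤ w ⬝ᵥ v) :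
    m ^ 2 * (v ⬝ᵥ A *ᵥ v) ≤ w ⬝ᵥ A⁻¹ *ᵥ w := by
  have hq : 0 ≤ v ⬝ᵥ A *ᵥ v := by simpa using hA.posSemidef.dotProduct_mulVec_nonneg v
  have hCS := hA.sq_dotProduct_le w v
  rcases hq.eq_or_lt with hq0 | hqpos
  · rw [← hq0, mul_zero]; simpa using hA.inv.posSemidef.dotProduct_mulVec_nonneg w
  · have : (m * (v ⬝ᵥ A *ᵥ v)) ^ 2 ≤ (w ⬝ᵥ v) ^ 2 := pow_le_pow_left₀ (by positivity) h 2
    nlinarith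

end Matrix

section Gram

variable {ι n : Type*} [Fintype ι] [Fintype n] [DecidableEq n]

def regularizedGram (c : ι → ℝ) (X : ι → n → ℝ) (r : ℝ) : Matrix n n ℝ :=
  ∑ l, c l • vecMulVec (X l) (X l) + r • 1

def glmMap (μ : ℝ → ℝ) (X : ι → n → ℝ) (lam : ℝ) (θ : n → ℝ) : n → ℝ :=
  ∑ l, μ (X l ⬝ᵥ θ) • X l + lam • θ

theorem dotProduct_regularizedGram_mulVec (c : ι → ℝ) (X : ι → n → ℝ) (r : ℝ) (x : n → ℝ) :
    x ⬝ᵥ regularizedGram c X r *ᵥ x = ∑ l, c l * (X l ⬝ᵥ x) ^ 2 + r * (x ⬝ᵥ x) := by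
  simp only [regularizedGram, add_mulVec, sum_mulVec, smul_mulVec, vecMulVec_mulVec, one_mulVec,
    dotProduct_add, dotProduct_sum, dotProduct_smul, op_smul_eq_smul, smul_eq_mul]
  congr 1
  exact Finset.sum_congr rfl fun l _ => by rw [dotProduct_comm x]; ring

theorem posDef_regularizedGram {c : ι → ℝ} (hc : ∀ l, 0 ≤ c l) (X : ι → n → ℝ) {r : ℝ}
    (hr : 0 < r) : (regularizedGram c X r).PosDef :=
  PosDef.posSemidef_add
    (posSemidef_sum _ fun l _ => by simpa using (posSemidef_vecMulVec_self_star (X l)).smul (hc l))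
    (PosDef.one.smul hr)

theorem dotProduct_regularizedGram_mulVec_le_mul {c : ι → ℝ} {r a s : ℝ} (hc : ∀ l, c l ≤ a)
    (hr : r ≤ a * s) (X : ι → n → ℝ) (x : n → ℝ) :
    x ⬝ᵥ regularizedGram c X r *ᵥ x ≤ a * (x ⬝ᵥ regularizedGram 1 X s *ᵥ x) := by
  simp only [dotProduct_regularizedGram_mulVec, Pi.one_apply, one_mul, mul_add, Finset.mul_sum,
    ← mul_assoc]
  have hxx : 0 ≤ x ⬝ᵥ x := dotProduct_self_star_nonneg x
  gcongr with l
  exact hc l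

theorem mul_dotProduct_regularizedGram_le_glmMap_sub_dotProduct {μ : ℝ → ℝ}
    (hμ : Differentiable ℝ μ) {m : ℝ} (hm : ∀ u, m ≤ deriv μ u) (hm0 : m ≠ 0)
    (X : ι → n → ℝ) (lam : ℝ) (θ θ' : n → ℝ) :
    m * ((θ - θ') ⬝ᵥ regularizedGram 1 X (lam / m) *ᵥ (θ - θ'))
      ≤ (glmMap μ X lam θ - glmMap μ X lam θ') ⬝ᵥ (θ - θ') := by
  have hdiff : glmMap μ X lam θ - glmMap μ X lam θ'
      = ∑ l, (μ (X l ⬝ᵥ θ) - μ (X l ⬝ᵥ θ')) • X l + lam • (θ - θ') := by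
    simp only [glmMap, sub_smul, Finset.sum_sub_distrib, smul_sub]
    abel
  rw [hdiff, dotProduct_regularizedGram_mulVec]
  simp only [add_dotProduct, sum_dotProduct, smul_dotProduct, smul_eq_mul, Pi.one_apply, one_mul,
    mul_add, Finset.mul_sum, ← mul_assoc, mul_div_cancel₀ _ hm0]
  refine add_le_add (Finset.sum_le_sum fun l _ => ?_) le_rfl
  simpa [dotProduct_sub] using mul_sq_le_sub_mul_sub_of_le_deriv hμ hm (X l ⬝ᵥ θ) (X l ⬝ᵥ θ')

end Gram

theorem dist_H_le_grad_diff_Gt_general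
    {d t : ℕ} (lam : ℝ) (hlam : 0 < lam)
    (μ : ℝ → ℝ) (hdiff : Differentiable ℝ μ)
    (μmin μmax : ℝ) (hμmin : 0 < μmin)
    (hbound : ∀ u : ℝ, μmin ≤ deriv μ u ∧ deriv μ u ≤ μmax)
    (X : Fin t → (Fin d → ℝ))
    (H : (Fin d → ℝ) → Matrix (Fin d) (Fin d) ℝ)
    (hH : ∀ θ, H θ = ∑ l, deriv μ (X l ⬝ᵥ θ) • vecMulVec (X l) (X l)
        + lam • (1 : Matrix (Fin d) (Fin d) ℝ))
    (f : (Fin d → ℝ) → (Fin d → ℝ))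
    (hf : ∀ θ, f θ = ∑ l, μ (X l ⬝ᵥ θ) • X l + lam • θ)
    (G : Matrix (Fin d) (Fin d) ℝ)
    (hG : G = ∑ l, vecMulVec (X l) (X l) + (lam / μmin) • (1 : Matrix (Fin d) (Fin d) ℝ)) :
    ∀ θ θ' θ'' : Fin d → ℝ,
      Real.sqrt ((θ - θ') ⬝ᵥ (H θ'').mulVec (θ - θ'))
        ≤ Real.sqrt μmax * μmin⁻¹ *
          Real.sqrt ((f θ - f θ') ⬝ᵥ G⁻¹.mulVec (f θ - f θ')) := by
  intro θ θ' θ''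
  have hminmax : μmin ≤ μmax := (hbound 0).1.trans (hbound 0).2
  have hμmax : 0 ≤ μmax := hμmin.le.trans hminmax
  have hG' : G = regularizedGram 1 X (lam / μmin) := by simp [hG, regularizedGram]
  have hGpd : G.PosDef :=
    hG' ▸ posDef_regularizedGram (fun _ => zero_le_one) X (div_pos hlam hμmin)
  have hupper : (θ - θ') ⬝ᵥ H θ'' *ᵥ (θ - θ') ≤ μmax * ((θ - θ') ⬝ᵥ G *ᵥ (θ - θ')) := by
    rw [hH θ'', hG']
    refine dotProduct_regularizedGram_mulVec_le_mul (c := fun l => deriv μ (X l ⬝ᵥ θ''))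
      (fun l => (hbound _).2) ?_ X (θ - θ')
    rw [mul_div_assoc', le_div_iff₀ hμmin, mul_comm]
    exact mul_le_mul_of_nonneg_right hminmax hlam.le
  have hmono : μmin * ((θ - θ') ⬝ᵥ G *ᵥ (θ - θ')) ≤ (f θ - f θ') ⬝ᵥ (θ - θ') := by
    rw [hG', funext hf]
    exact mul_dotProduct_regularizedGram_le_glmMap_sub_dotProduct hdiff (fun u => (hbound u).1)
      hμmin.ne' X lam θ θ'
  have hinv := hGpd.mul_sq_dotProduct_mulVec_le hμmin.le hmono
  calc √((θ - θ') ⬝ᵥ H θ'' *ᵥ (θ - θ'))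
      ≤ √(μmax * ((f θ - f θ') ⬝ᵥ G⁻¹ *ᵥ (f θ - f θ') / μmin ^ 2)) := by
        gcongr
        refine hupper.trans (mul_le_mul_of_nonneg_left ?_ hμmax)
        rwa [le_div_iff₀ (by positivity), mul_comm]
    _ = √μmax * μmin⁻¹ * √((f θ - f θ') ⬝ᵥ G⁻¹ *ᵥ (f θ - f θ')) := by
        rw [Real.sqrt_mul hμmax, Real.sqrt_div' _ (by positivity), Real.sqrt_sq hμmin.le]
        ring

/-- GLM distance bound via the auxiliary design matrix `G_t`:
`‖θ − θ'‖_{H(θ'')} ≤ μ̇_max^{1/2}·μ̇_min^{−1}·‖f_t(θ) − f_t(θ')‖_{G_t⁻¹}`. -/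
theorem dist_H_le_grad_diff_Gt
    {d t : ℕ} (M lam : ℝ) (hM : 0 < M) (hlam : 0 < lam)
    (μ : ℝ → ℝ) (hdiff : Differentiable ℝ μ) (hdiff2 : Differentiable ℝ (deriv μ))
    (hpos : ∀ u : ℝ, 0 < deriv μ u)
    (hsc : ∀ u : ℝ, |deriv (deriv μ) u| ≤ M * deriv μ u)
    (μmin μmax : ℝ) (hμmin : 0 < μmin)
    (hbound : ∀ u : ℝ, μmin ≤ deriv μ u ∧ deriv μ u ≤ μmax)
    (𝒳 : Finset (Fin d → ℝ)) (h𝒳ne : 𝒳.Nonempty)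
    (h𝒳norm : ∀ X ∈ 𝒳, Real.sqrt (∑ i, X i ^ 2) ≤ 1)
    (X : Fin t → (Fin d → ℝ)) (hX : ∀ l, X l ∈ 𝒳)
    (H : (Fin d → ℝ) → Matrix (Fin d) (Fin d) ℝ)
    (hH : ∀ θ, H θ = ∑ l, deriv μ (X l ⬝ᵥ θ) • vecMulVec (X l) (X l)
        + lam • (1 : Matrix (Fin d) (Fin d) ℝ))
    (f : (Fin d → ℝ) → (Fin d → ℝ))
    (hf : ∀ θ, f θ = ∑ l, μ (X l ⬝ᵥ θ) • X l + lam • θ)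
    (G : Matrix (Fin d) (Fin d) ℝ)
    (hG : G = ∑ l, vecMulVec (X l) (X l) + (lam / μmin) • (1 : Matrix (Fin d) (Fin d) ℝ)) :
    ∀ θ θ' θ'' : Fin d → ℝ,
      Real.sqrt ((θ - θ') ⬝ᵥ (H θ'').mulVec (θ - θ'))
        ≤ Real.sqrt μmax * μmin⁻¹ *
          Real.sqrt ((f θ - f θ') ⬝ᵥ G⁻¹.mulVec (f θ - f θ')) :=
  dist_H_le_grad_diff_Gt_general lam hlam μ hdiff μmin μmax hμmin hbound X H hH f hf G hG
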